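/- arXiv:1403.7961 — 3 statements merged into one kernel-verified Lean document; each statement's English description precedes it below -/
import Mathlib

section
/- Assume the discrete isoperimetric inequality |Δ|^{(d-1)/d} ≤ |∂Δ|/(2d) holds for all finite Δ ⊂ ℤ^d, d ≥ 2. Let h(x) = h*/max(|x|,1)^α with α > 1, h* > 0, J > 0. Then there exists C > 0 (depending on h*, α, d, J) such that for every finite Δ ⊂ ℤ^d with |Δ| > C, one has J·|∂Δ| > 2·Σ_{x∈Δ} h(x). -/
open Finset

/-!
By Hölder's inequality, `∑_{x ∈ Δ} h(x) ≤ ‖h‖_p · |Δ|^{1 - 1/p}`, and `h ∈ ℓ^p(ℤ^d)` as soon as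
`α p > d`, since `max(|x|, 1)^{-αp}` is dominated by the product `∏ᵢ max(|xᵢ|, 1)^{-αp/d}` of
one-dimensional `p`-series. Because `α > 1` one can also take `p < d`, so the field sum grows like
`|Δ|^{1 - 1/p}`, strictly slower than the isoperimetric lower bound `2d |Δ|^{(d-1)/d}` on `|∂Δ|`.
-/

/-- ℓ¹ norm of a lattice point in ℤ^d. -/
def l1 {d : ℕ} (x : Fin d → ℤ) : ℕ := ∑ i, (x i).natAbs

/-- The magnetic field `h(x) = h*/max(|x|,1)^α`. -/
noncomputable def hfield (d : ℕ) (hstar α : ℝ) (x : Fin d → ℤ) : ℝ :=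
  hstar / ((max (l1 x) 1 : ℕ) : ℝ) ^ α

/-- Edge boundary size: the number of nearest-neighbor pairs `(x,y)` with `x ∈ Δ`, `y ∉ Δ`. -/
def bdry {d : ℕ} (Δ : Finset (Fin d → ℤ)) : ℕ :=
  ∑ x ∈ Δ, (((Finset.univ : Finset (Fin d)) ×ˢ ({-1, 1} : Finset ℤ)).filter
    (fun p => x + Pi.single p.1 p.2 ∉ Δ)).card

theorem Real.sum_le_sum_rpow_rpow_mul_card_rpow {ι : Type*} (s : Finset ι) {f : ι → ℝ}
    (hf : ∀ i ∈ s, 0 ≤ f i) {p : ℝ} (hp : 1 ≤ p) :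
    ∑ i ∈ s, f i ≤ (∑ i ∈ s, f i ^ p) ^ (1 / p) * (#s : ℝ) ^ (1 - 1 / p) := by
  have hp0 : 0 < p := by linarith
  have hsum : 0 ≤ ∑ i ∈ s, f i := sum_nonneg hf
  have hsump : 0 ≤ ∑ i ∈ s, f i ^ p := sum_nonneg fun i hi => Real.rpow_nonneg (hf i hi) p
  calc ∑ i ∈ s, f i = ((∑ i ∈ s, f i) ^ p) ^ (1 / p) := by
        rw [← Real.rpow_mul hsum, mul_one_div_cancel hp0.ne', Real.rpow_one]
    _ ≤ ((#s : ℝ) ^ (p - 1) * ∑ i ∈ s, f i ^ p) ^ (1 / p) := by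
        gcongr
        exact Real.rpow_sum_le_const_mul_sum_rpow_of_nonneg s hp hf
    _ = (∑ i ∈ s, f i ^ p) ^ (1 / p) * (#s : ℝ) ^ (1 - 1 / p) := by
        rw [Real.mul_rpow (by positivity) hsump, ← Real.rpow_mul (by positivity), mul_comm]
        congr 2
        field_simp

theorem Filter.eventually_mul_rpow_lt_mul_rpow_atTop (a : ℝ) {b e₁ e₂ : ℝ} (hb : 0 < b)
    (he : e₁ < e₂) : ∀ᶠ x : ℝ in atTop, a * x ^ e₁ < b * x ^ e₂ := by
  filter_upwards [(tendsto_rpow_atTop (sub_pos.2 he)).eventually_gt_atTop (a / b),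
    eventually_gt_atTop 0] with x hx hx0
  have hxe₁ : 0 < x ^ e₁ := Real.rpow_pos_of_pos hx0 e₁
  calc a * x ^ e₁ = a / b * (b * x ^ e₁) := by field_simp
    _ < x ^ (e₂ - e₁) * (b * x ^ e₁) := by gcongr
    _ = b * x ^ e₂ := by
        rw [Real.rpow_sub hx0]
        field_simp

theorem summable_max_natAbs_one_rpow_neg {u : ℝ} (hu : 1 < u) :
    Summable fun k : ℤ => ((max k.natAbs 1 : ℕ) : ℝ) ^ (-u) := by
  refine ((Real.summable_abs_int_rpow hu).update 0 1).congr fun k => ?_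
  rcases eq_or_ne k 0 with rfl | hk
  · simp
  · have : 1 ≤ k.natAbs := Int.natAbs_pos.2 hk
    simp [Function.update_of_ne hk, max_eq_left this, Nat.cast_natAbs]

theorem max_l1_one_rpow_neg_le_prod {d : ℕ} (hd : 0 < d) {t : ℝ} (ht : 0 ≤ t)
    (x : Fin d → ℤ) :
    ((max (l1 x) 1 : ℕ) : ℝ) ^ (-t) ≤ ∏ i, ((max (x i).natAbs 1 : ℕ) : ℝ) ^ (-(t / d)) := by
  have hm : (1 : ℝ) ≤ ((max (l1 x) 1 : ℕ) : ℝ) := by exact_mod_cast le_max_right _ _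
  calc ((max (l1 x) 1 : ℕ) : ℝ) ^ (-t)
        = ∏ _i : Fin d, ((max (l1 x) 1 : ℕ) : ℝ) ^ (-(t / d)) := by
        rw [prod_const, card_univ, Fintype.card_fin, ← Real.rpow_mul_natCast (by linarith)]
        field_simp
    _ ≤ ∏ i, ((max (x i).natAbs 1 : ℕ) : ℝ) ^ (-(t / d)) := by
        refine prod_le_prod (fun _ _ => by positivity) fun i _ => ?_
        refine Real.rpow_le_rpow_of_nonpos (by positivity) ?_ (neg_nonpos.2 (by positivity))
        have : (x i).natAbs ≤ l1 x :=
          single_le_sum (f := fun j => (x j).natAbs) (fun _ _ => Nat.zero_le _) (mem_univ i)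
        exact_mod_cast max_le_max_right 1 this

theorem sum_max_l1_one_rpow_neg_le {d : ℕ} (hd : 0 < d) {t : ℝ} (ht : d < t)
    (Δ : Finset (Fin d → ℤ)) :
    ∑ x ∈ Δ, ((max (l1 x) 1 : ℕ) : ℝ) ^ (-t) ≤
      (∑' k : ℤ, ((max k.natAbs 1 : ℕ) : ℝ) ^ (-(t / d))) ^ d := by
  classical
  set g : ℤ → ℝ := fun k => ((max k.natAbs 1 : ℕ) : ℝ) ^ (-(t / d))
  have hg : Summable g :=
    summable_max_natAbs_one_rpow_neg ((one_lt_div (by positivity)).2 ht)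
  have hg0 : ∀ k, 0 ≤ g k := fun k => by positivity
  calc ∑ x ∈ Δ, ((max (l1 x) 1 : ℕ) : ℝ) ^ (-t) ≤ ∑ x ∈ Δ, ∏ i, g (x i) :=
        sum_le_sum fun x _ => max_l1_one_rpow_neg_le_prod hd (d.cast_nonneg.trans ht.le) x
    _ ≤ ∑ x ∈ Fintype.piFinset fun i => Δ.image (· i), ∏ i, g (x i) :=
        sum_le_sum_of_subset_of_nonneg
          (fun x hx => Fintype.mem_piFinset.2 fun i => mem_image_of_mem _ hx)
          fun _ _ _ => prod_nonneg fun i _ => hg0 _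
    _ = ∏ i, ∑ k ∈ Δ.image (· i), g k := (prod_univ_sum _ _).symm
    _ ≤ ∏ _i : Fin d, ∑' k, g k :=
        prod_le_prod (fun _ _ => sum_nonneg fun _ _ => hg0 _)
          fun _ _ => hg.sum_le_tsum _ fun _ _ => hg0 _
    _ = (∑' k, g k) ^ d := by simp

theorem hfield_rpow {d : ℕ} {hstar : ℝ} (hh : 0 ≤ hstar) (α p : ℝ) (x : Fin d → ℤ) :
    hfield d hstar α x ^ p = hstar ^ p * ((max (l1 x) 1 : ℕ) : ℝ) ^ (-(α * p)) := by
  rw [hfield, Real.div_rpow hh (by positivity), ← Real.rpow_mul (by positivity),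
    Real.rpow_neg (by positivity), div_eq_mul_inv]

theorem exists_sum_hfield_le_mul_card_rpow {d : ℕ} (hd : 0 < d) {hstar α p : ℝ}
    (hh : 0 ≤ hstar) (hp : 1 ≤ p) (hαp : d < α * p) :
    ∃ A : ℝ, ∀ Δ : Finset (Fin d → ℤ),
      ∑ x ∈ Δ, hfield d hstar α x ≤ A * (Δ.card : ℝ) ^ (1 - 1 / p) := by
  set S := (∑' k : ℤ, ((max k.natAbs 1 : ℕ) : ℝ) ^ (-(α * p / d))) ^ d
  have h0 : ∀ x : Fin d → ℤ, 0 ≤ hfield d hstar α x := fun x => by unfold hfield; positivity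
  have hp0 : 0 < p := by linarith
  refine ⟨(hstar ^ p * S) ^ (1 / p), fun Δ => ?_⟩
  refine (Real.sum_le_sum_rpow_rpow_mul_card_rpow Δ (fun x _ => h0 x) hp).trans ?_
  gcongr ?_ ^ _ * _
  · exact sum_nonneg fun x _ => Real.rpow_nonneg (h0 x) p
  simp only [hfield_rpow hh, ← mul_sum]
  gcongr
  exact sum_max_l1_one_rpow_neg_le hd hαp Δ

theorem statement6 (d : ℕ) (hd : 2 ≤ d) (hstar α J : ℝ)
    (hh : 0 < hstar) (hα : 1 < α) (hJ : 0 < J)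
    (hiso : ∀ Δ : Finset (Fin d → ℤ),
      (Δ.card : ℝ) ^ (((d : ℝ) - 1) / d) ≤ (bdry Δ : ℝ) / (2 * d)) :
    ∃ C : ℝ, 0 < C ∧ ∀ Δ : Finset (Fin d → ℤ), C < (Δ.card : ℝ) →
      2 * ∑ x ∈ Δ, hfield d hstar α x < J * (bdry Δ : ℝ) := by
  have hd2 : (2 : ℝ) ≤ d := by exact_mod_cast hd
  -- any `p` with `max 1 (d / α) < p < d` works
  set p : ℝ := d * (1 + α) / (2 * α) with hp_def
  have hp : 1 ≤ p := by rw [le_div_iff₀ (by positivity)]; nlinarith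
  have hαp : d < α * p := by
    have : α * p = d * (1 + α) / 2 := by rw [hp_def]; field_simp
    rw [this]; nlinarith
  have hpd : 1 - 1 / p < ((d : ℝ) - 1) / d := by
    have : p < d := by rw [div_lt_iff₀ (by positivity)]; nlinarith
    rw [sub_div, div_self (by positivity)]
    exact sub_lt_sub_left (one_div_lt_one_div_of_lt (by linarith) this) 1
  obtain ⟨A, hA⟩ := exists_sum_hfield_le_mul_card_rpow (by omega) hh.le hp hαp
  obtain ⟨N, hN⟩ := Filter.eventually_atTop.1
    (Filter.eventually_mul_rpow_lt_mul_rpow_atTop (2 * A) (by positivity : 0 < J * (2 * d)) hpd)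
  refine ⟨max N 1, by positivity, fun Δ hΔ => ?_⟩
  calc 2 * ∑ x ∈ Δ, hfield d hstar α x ≤ 2 * A * (Δ.card : ℝ) ^ (1 - 1 / p) := by
        rw [mul_assoc]; gcongr; exact hA Δ
    _ < J * (2 * d) * (Δ.card : ℝ) ^ (((d : ℝ) - 1) / d) :=
        hN _ ((le_max_left _ _).trans hΔ.le)
    _ ≤ J * (bdry Δ : ℝ) := by
        rw [mul_assoc]
        gcongr
        rw [mul_comm, ← le_div_iff₀ (by positivity)]
        exact hiso Δ
end

section
/- Assume the discrete isoperimetric inequality |Δ|^{(d-1)/d} ≤ |∂Δ|/(2d) for all finite Δ ⊂ ℤ^d, d ≥ 2, and let h(x) = h*/max(|x|,1)^α with α > 1, h*, J > 0. Define ĥ(x) = 0 for |x| ≤ R and ĥ(x) = h(x) for |x| > R. Then there exists R such that J·|∂Δ| > 2·Σ_{x∈Δ} ĥ(x) for ALL finite nonempty Δ ⊂ ℤ^d. -/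
open Finset

/-!
Beyond radius `R` the field is at most `h* / (R+1)^(α-1) · 1/|x|`, so it suffices to bound
`∑_{x∈Δ} 1/max(|x|,1) ≤ 5·3^(d-1)·|Δ|^((d-1)/d)`. For this, cut at the radius `m = ⌊|Δ|^(1/d)⌋`:
the ℓ¹-sphere of radius `k` has at most `2(2k+1)^(d-1)` points, so the points inside contribute
`O(m^(d-1))`, while each of the at most `|Δ|` points outside contributes less than `1/m`.
The isoperimetric inequality turns `|Δ|^((d-1)/d)` into `|∂Δ|/(2d)`, and the prefactor
`(R+1)^(1-α)` is made small by taking `R` large.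
-/

lemma l1_eq_l1_init_add {n : ℕ} (x : Fin (n + 1) → ℤ) :
    l1 x = l1 (Fin.init x) + (x (Fin.last n)).natAbs := by
  simp only [l1, Fin.sum_univ_castSucc, Fin.init]

lemma card_filter_l1_eq_le {n : ℕ} (Δ : Finset (Fin (n + 1) → ℤ)) (k : ℕ) :
    #{x ∈ Δ | l1 x = k} ≤ 2 * (2 * k + 1) ^ n := by
  let box := Fintype.piFinset (fun _ : Fin n => Icc (-(k : ℤ)) k) ×ˢ (univ : Finset Bool)
  have hbox : #box = 2 * (2 * k + 1) ^ n := by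
    simp only [box, card_product, Fintype.card_piFinset, Int.card_Icc, prod_const, card_univ,
      Fintype.card_fin, Fintype.card_bool]
    rw [mul_comm]; congr; omega
  rw [← hbox]
  refine card_le_card_of_injOn (fun x => (Fin.init x, decide (0 ≤ x (Fin.last n)))) ?_ ?_
  · intro x hx
    simp only [coe_filter, Set.mem_ofPred_eq] at hx
    simp only [box, coe_product, Set.mem_prod, mem_coe, Fintype.mem_piFinset, mem_Icc, mem_univ,
      and_true]
    intro i
    have : (Fin.init x i).natAbs ≤ l1 (Fin.init x) :=
      single_le_sum (f := fun i => (Fin.init x i).natAbs) (fun _ _ => Nat.zero_le _) (mem_univ i)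
    have := l1_eq_l1_init_add x
    omega
  · intro x hx y hy hxy
    simp only [coe_filter, Set.mem_ofPred_eq, Prod.mk.injEq, decide_eq_decide] at hx hy hxy
    have hlast : x (Fin.last n) = y (Fin.last n) := by
      have hx' := l1_eq_l1_init_add x
      have hy' := l1_eq_l1_init_add y
      rw [hxy.1] at hx'
      omega
    rw [← Fin.snoc_init_self x, ← Fin.snoc_init_self y, hxy.1, hlast]

lemma sum_inv_l1_filter_le_le {n m : ℕ} (hm : 1 ≤ m) (Δ : Finset (Fin (n + 2) → ℤ)) :
    ∑ x ∈ Δ with l1 x ≤ m, ((max (l1 x) 1 : ℕ) : ℝ)⁻¹ ≤ 4 * 3 ^ (n + 1) * m ^ (n + 1) := by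
  rw [← sum_fiberwise_of_maps_to (g := l1) (t := range (m + 1))
    (fun x hx => mem_range_succ_iff.2 (mem_filter.1 hx).2)]
  have hshell : ∀ k ∈ range (m + 1), ∑ x ∈ {x ∈ Δ | l1 x ≤ m} with l1 x = k,
      ((max (l1 x) 1 : ℕ) : ℝ)⁻¹ ≤ 2 * 3 ^ (n + 1) * m ^ n := by
    intro k hk
    have hkm : max k 1 ≤ m := max_le (mem_range_succ_iff.1 hk) hm
    rw [sum_congr rfl fun x hx => by rw [(mem_filter.1 hx).2], sum_const, nsmul_eq_mul]
    calc _ ≤ (2 * (2 * k + 1) ^ (n + 1) : ℝ) * ((max k 1 : ℕ) : ℝ)⁻¹ := by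
          gcongr; exact_mod_cast card_filter_l1_eq_le _ k
      _ ≤ 2 * (3 * ((max k 1 : ℕ) : ℝ)) ^ (n + 1) * ((max k 1 : ℕ) : ℝ)⁻¹ := by
          gcongr; exact_mod_cast (by omega : 2 * k + 1 ≤ 3 * max k 1)
      _ = 2 * 3 ^ (n + 1) * ((max k 1 : ℕ) : ℝ) ^ n := by field_simp; ring
      _ ≤ 2 * 3 ^ (n + 1) * m ^ n := by gcongr
  have hm' : (1 : ℝ) ≤ m := by exact_mod_cast hm
  calc _ ≤ (m + 1 : ℕ) • (2 * 3 ^ (n + 1) * (m : ℝ) ^ n) := by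
        simpa using sum_le_card_nsmul _ _ _ hshell
    _ ≤ (2 * m) * (2 * 3 ^ (n + 1) * (m : ℝ) ^ n) := by
        rw [nsmul_eq_mul]; push_cast; gcongr; linarith
    _ = 4 * 3 ^ (n + 1) * (m : ℝ) ^ (n + 1) := by ring

lemma sum_inv_l1_filter_not_le_le {d : ℕ} (m : ℕ) (Δ : Finset (Fin d → ℤ)) :
    ∑ x ∈ Δ with ¬ l1 x ≤ m, ((max (l1 x) 1 : ℕ) : ℝ)⁻¹ ≤ #Δ / (m + 1) := by
  calc _ ≤ #{x ∈ Δ | ¬ l1 x ≤ m} • ((m : ℝ) + 1)⁻¹ := by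
        refine sum_le_card_nsmul _ _ _ fun x hx => ?_
        have : m + 1 ≤ max (l1 x) 1 := by simp only [mem_filter] at hx; omega
        gcongr; exact_mod_cast this
    _ ≤ #Δ / (m + 1) := by
        rw [nsmul_eq_mul, ← div_eq_mul_inv]
        gcongr; exact filter_subset _ _

lemma sum_inv_l1_le_of_card_eq_pow {n : ℕ} {t : ℝ} (ht : 1 ≤ t) {Δ : Finset (Fin (n + 2) → ℤ)}
    (hΔ : (#Δ : ℝ) = t ^ (n + 2)) :
    ∑ x ∈ Δ, ((max (l1 x) 1 : ℕ) : ℝ)⁻¹ ≤ 5 * 3 ^ (n + 1) * t ^ (n + 1) := by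
  have hm : 1 ≤ ⌊t⌋₊ := Nat.le_floor (by simpa using ht)
  have hmt : (⌊t⌋₊ : ℝ) ≤ t := Nat.floor_le (by positivity)
  have houter : (#Δ : ℝ) / (⌊t⌋₊ + 1) ≤ 3 ^ (n + 1) * t ^ (n + 1) := by
    rw [div_le_iff₀ (by positivity), hΔ, pow_succ]
    gcongr
    · exact le_mul_of_one_le_left (by positivity) (one_le_pow₀ (by norm_num))
    · exact (Nat.lt_floor_add_one t).le
  rw [← sum_filter_add_sum_filter_not Δ (fun x => l1 x ≤ ⌊t⌋₊)]
  calc _ ≤ 4 * 3 ^ (n + 1) * (⌊t⌋₊ : ℝ) ^ (n + 1) + #Δ / (⌊t⌋₊ + 1) :=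
        add_le_add (sum_inv_l1_filter_le_le hm Δ) (sum_inv_l1_filter_not_le_le _ Δ)
    _ ≤ 4 * 3 ^ (n + 1) * t ^ (n + 1) + 3 ^ (n + 1) * t ^ (n + 1) := by gcongr
    _ = 5 * 3 ^ (n + 1) * t ^ (n + 1) := by ring

lemma sum_inv_l1_le {d : ℕ} (hd : 2 ≤ d) (Δ : Finset (Fin d → ℤ)) :
    ∑ x ∈ Δ, ((max (l1 x) 1 : ℕ) : ℝ)⁻¹ ≤ 5 * 3 ^ (d - 1) * (#Δ : ℝ) ^ (((d : ℝ) - 1) / d) := by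
  obtain ⟨n, rfl⟩ : ∃ n, d = n + 2 := ⟨d - 2, by omega⟩
  rcases Δ.eq_empty_or_nonempty with rfl | hΔ
  · simp only [sum_empty]; positivity
  have hN : (1 : ℝ) ≤ #Δ := by exact_mod_cast card_pos.2 hΔ
  obtain ⟨t, ht, htN⟩ : ∃ t : ℝ, 1 ≤ t ∧ (#Δ : ℝ) = t ^ (n + 2) :=
    ⟨_, Real.one_le_rpow hN (by positivity), (Real.rpow_inv_natCast_pow (by positivity) (by omega)).symm⟩
  have hpow : (#Δ : ℝ) ^ ((((n + 2 : ℕ) : ℝ) - 1) / (n + 2 : ℕ)) = t ^ (n + 1) := by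
    rw [htN, ← Real.rpow_natCast, ← Real.rpow_mul (by positivity), ← Real.rpow_natCast]
    congr 1; push_cast; field_simp; ring
  rw [hpow]
  exact sum_inv_l1_le_of_card_eq_pow ht htN

lemma exists_lt_natCast_add_one_rpow (M : ℝ) {β : ℝ} (hβ : 0 < β) :
    ∃ R : ℕ, M < ((R : ℝ) + 1) ^ β := by
  obtain ⟨R, hR⟩ := ((tendsto_rpow_atTop hβ).comp
    tendsto_natCast_atTop_atTop).eventually_gt_atTop M |>.exists
  exact ⟨R, hR.trans_le (by simp only [Function.comp_apply]; gcongr; linarith)⟩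

lemma ite_hfield_le {d : ℕ} {hstar α : ℝ} (hh : 0 ≤ hstar) (hα : 1 ≤ α) (R : ℕ) (x : Fin d → ℤ) :
    (if l1 x ≤ R then (0 : ℝ) else hfield d hstar α x) ≤
      hstar / ((R : ℝ) + 1) ^ (α - 1) * ((max (l1 x) 1 : ℕ) : ℝ)⁻¹ := by
  split_ifs with hx
  · positivity
  have hL : max (l1 x) 1 = l1 x := by omega
  have hRL : (R : ℝ) + 1 ≤ l1 x := by exact_mod_cast (not_le.1 hx)
  have hL0 : (0 : ℝ) < l1 x := by linarith
  have hsplit : (l1 x : ℝ) ^ α = (l1 x : ℝ) ^ (α - 1) * l1 x := by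
    rw [← Real.rpow_add_one hL0.ne', sub_add_cancel]
  rw [hfield, hL, ← div_eq_mul_inv, div_div, hsplit]
  gcongr

theorem statement7 (d : ℕ) (hd : 2 ≤ d) (hstar α J : ℝ)
    (hh : 0 < hstar) (hα : 1 < α) (hJ : 0 < J)
    (hiso : ∀ Δ : Finset (Fin d → ℤ),
      (Δ.card : ℝ) ^ (((d : ℝ) - 1) / d) ≤ (bdry Δ : ℝ) / (2 * d)) :
    ∃ R : ℕ, ∀ Δ : Finset (Fin d → ℤ), Δ.Nonempty →
      2 * ∑ x ∈ Δ, (if l1 x ≤ R then (0 : ℝ) else hfield d hstar α x)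
        < J * (bdry Δ : ℝ) := by
  have hd0 : (0 : ℝ) < d := by positivity
  obtain ⟨R, hR⟩ := exists_lt_natCast_add_one_rpow (5 * 3 ^ (d - 1) * hstar / (d * J)) (sub_pos.2 hα)
  refine ⟨R, fun Δ hΔ => ?_⟩
  set c := hstar / ((R : ℝ) + 1) ^ (α - 1)
  have hc : c * (5 * 3 ^ (d - 1)) / d < J := by
    rw [div_lt_iff₀ (by positivity)] at hR
    rw [div_lt_iff₀ hd0, div_mul_eq_mul_div, div_lt_iff₀ (by positivity)]
    linarith
  have hsum : ∑ x ∈ Δ, (if l1 x ≤ R then (0 : ℝ) else hfield d hstar α x) ≤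
      c * (5 * 3 ^ (d - 1) * (#Δ : ℝ) ^ (((d : ℝ) - 1) / d)) := by
    grw [sum_le_sum fun x _ => ite_hfield_le hh.le hα.le R x, ← mul_sum, sum_inv_l1_le hd Δ]
  have hbdry : (0 : ℝ) < bdry Δ := by
    have h1 : (1 : ℝ) ≤ (#Δ : ℝ) ^ (((d : ℝ) - 1) / d) :=
      Real.one_le_rpow (by exact_mod_cast card_pos.2 hΔ)
        (div_nonneg (by linarith [(show (2 : ℝ) ≤ d by exact_mod_cast hd)]) hd0.le)
    have := h1.trans (hiso Δ)
    rw [le_div_iff₀ (by positivity)] at this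
    linarith
  calc 2 * ∑ x ∈ Δ, (if l1 x ≤ R then (0 : ℝ) else hfield d hstar α x)
      ≤ 2 * (c * (5 * 3 ^ (d - 1) * ((bdry Δ : ℝ) / (2 * d)))) := by
        grw [hsum, hiso Δ]
    _ = c * (5 * 3 ^ (d - 1)) / d * bdry Δ := by field_simp
    _ < J * bdry Δ := by gcongr
end

section
/- Let ν be a probability measure, μ a probability measure, φ : {-1,1}^{ℤ^d} → ℝ a bounded function depending only on finitely many coordinates (all contained in a finite cube Λ₀), and suppose dν = C · e^{βΦ} dμ where Φ(σ) = Σ_{x∈Λ₀} φ(x)σ(x) and C is the normalizing constant. If μ satisfies the DLR equations in every finite cube Λ ⊇ Λ₀ for the Hamiltonian Ĥ with field ĥ, then ν satisfies the DLR equations in every such Λ for the Hamiltonian H with field ĥ + φ. -/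
open MeasureTheory Finset

/-- Spin configurations on ℤ^d (spins are integers; only values ±1 are used). -/
abbrev Config (d : ℕ) := (Fin d → ℤ) → ℤ

/-- Replace the configuration `σ` inside `Λ` by the spin assignment `f` (spins ±1). -/
def patch {d : ℕ} (Λ : Finset (Fin d → ℤ))
    (f : ↥Λ → ({-1, 1} : Finset ℤ)) (σ : Config d) : Config d :=
  fun x => if hx : x ∈ Λ then (f ⟨x, hx⟩ : ℤ) else σ x

/-- Finite-volume Gibbs expectation of `g` in `Λ` with boundary condition `σ` outside `Λ`,
inverse temperature `β` and Hamiltonian `H` (evaluated on the full patched configuration). -/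
noncomputable def gibbsAvg {d : ℕ} (β : ℝ) (H : Config d → ℝ)
    (Λ : Finset (Fin d → ℤ)) (g : Config d → ℝ) (σ : Config d) : ℝ :=
  (∑ f : ↥Λ → ({-1, 1} : Finset ℤ),
      g (patch Λ f σ) * Real.exp (-β * H (patch Λ f σ))) /
  (∑ f : ↥Λ → ({-1, 1} : Finset ℤ), Real.exp (-β * H (patch Λ f σ)))

/-- The DLR equation for `μ` in the finite volume `Λ`, for Hamiltonian `H`:
the conditional distribution of the spins in `Λ` given the outside is the
finite-volume Gibbs measure. -/
def IsDLRAt {d : ℕ} (μ : Measure (Config d)) (β : ℝ) (H : Config d → ℝ)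
    (Λ : Finset (Fin d → ℤ)) : Prop :=
  ∀ g : Config d → ℝ, Measurable g → (∀ σ, |g σ| ≤ 1) →
    ∫ σ, g σ ∂μ = ∫ σ, gibbsAvg β H Λ g σ ∂μ

/-!
Write `γ_H g` for `gibbsAvg β H Λ g` and `ρ = C e^{βΦ}`. On every configuration patched in
`Λ ⊇ Λ₀` one has `ρ e^{-βĤ} = C e^{-βH}`, so `γ_Ĥ(ρ g) = γ_H(g) · γ_Ĥ(ρ)`; and `γ_H(g)` does
not depend on the spins in `Λ`, so it factors out of `γ_Ĥ`. Using the DLR equations of `μ` twice,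
`∫ g dν = ∫ γ_Ĥ(ρ g) dμ = ∫ γ_H(g) γ_Ĥ(ρ) dμ = ∫ γ_Ĥ(ρ γ_H(g)) dμ = ∫ γ_H(g) dν`.

Two technical points. The density is unbounded on integer-valued configurations, but `μ`-a.e. the
spins in `Λ` are `±1`, so it may be replaced by a bounded truncation. And `γ_H(g)` is only
`μ`-a.e. measurable (`Ĥ` is arbitrary); this suffices, because for a `μ`-null set `A`, almost
every configuration has no patch in `A`.
-/

instance : Nonempty (({-1, 1} : Finset ℤ)) := ⟨⟨1, by decide⟩⟩

section Patch

variable {d : ℕ} {Λ : Finset (Fin d → ℤ)}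

@[simp]
lemma patch_patch (f f' : ↥Λ → ({-1, 1} : Finset ℤ)) (σ : Config d) :
    patch Λ f (patch Λ f' σ) = patch Λ f σ := by
  funext x
  by_cases hx : x ∈ Λ <;> simp [patch, hx]

lemma abs_patch_le_one (f : ↥Λ → ({-1, 1} : Finset ℤ)) (σ : Config d) {x : Fin d → ℤ}
    (hx : x ∈ Λ) : |patch Λ f σ x| ≤ 1 := by
  have hs := (f ⟨x, hx⟩).2
  simp only [mem_insert, mem_singleton] at hs
  rcases hs with hs | hs <;> simp [patch, hx, hs]

end Patch

lemma abs_sum_mul_le_sum_abs {ι : Type*} (s : Finset ι) (a : ι → ℝ) {b : ι → ℤ}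
    (hb : ∀ i ∈ s, |b i| ≤ 1) : |∑ i ∈ s, a i * (b i : ℝ)| ≤ ∑ i ∈ s, |a i| := by
  refine (abs_sum_le_sum_abs _ _).trans (sum_le_sum fun i hi => ?_)
  rw [abs_mul]
  exact mul_le_of_le_one_right (abs_nonneg _) (by exact_mod_cast hb i hi)

lemma abs_indicator_one_le_one {α : Type*} (s : Set α) (a : α) :
    |s.indicator (1 : α → ℝ) a| ≤ 1 := by
  by_cases ha : a ∈ s <;> simp [Set.indicator_of_mem, Set.indicator_of_notMem, ha]

section GibbsAvg

variable {d : ℕ} {β : ℝ} {H : Config d → ℝ} {Λ : Finset (Fin d → ℤ)}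

lemma sum_exp_patch_pos (β : ℝ) (H : Config d → ℝ) (Λ : Finset (Fin d → ℤ)) (σ : Config d) :
    0 < ∑ f : ↥Λ → ({-1, 1} : Finset ℤ), Real.exp (-β * H (patch Λ f σ)) :=
  sum_pos (fun _ _ => Real.exp_pos _) univ_nonempty

lemma gibbsAvg_patch (g : Config d → ℝ) (f : ↥Λ → ({-1, 1} : Finset ℤ)) (σ : Config d) :
    gibbsAvg β H Λ g (patch Λ f σ) = gibbsAvg β H Λ g σ := by
  simp only [gibbsAvg, patch_patch]

lemma gibbsAvg_congr {g g' : Config d → ℝ} {σ : Config d}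
    (h : ∀ f, g (patch Λ f σ) = g' (patch Λ f σ)) :
    gibbsAvg β H Λ g σ = gibbsAvg β H Λ g' σ := by
  simp only [gibbsAvg, h]

lemma gibbsAvg_mul_of_patch_invariant {c : Config d → ℝ} (g : Config d → ℝ) {σ : Config d}
    (hc : ∀ f, c (patch Λ f σ) = c σ) :
    gibbsAvg β H Λ (fun τ => c τ * g τ) σ = c σ * gibbsAvg β H Λ g σ := by
  simp only [gibbsAvg, hc, mul_assoc, ← mul_sum, mul_div_assoc]

lemma gibbsAvg_const_mul (a : ℝ) (g : Config d → ℝ) (σ : Config d) :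
    gibbsAvg β H Λ (fun τ => a * g τ) σ = a * gibbsAvg β H Λ g σ :=
  gibbsAvg_mul_of_patch_invariant (c := fun _ => a) g fun _ => rfl

lemma gibbsAvg_add_const (g : Config d → ℝ) (b : ℝ) (σ : Config d) :
    gibbsAvg β H Λ (fun τ => g τ + b) σ = gibbsAvg β H Λ g σ + b := by
  have hZ := (sum_exp_patch_pos β H Λ σ).ne'
  simp only [gibbsAvg, add_mul, sum_add_distrib, ← mul_sum, add_div, mul_div_cancel_right₀ _ hZ]

lemma abs_gibbsAvg_le {g : Config d → ℝ} {M : ℝ} (hg : ∀ σ, |g σ| ≤ M) (σ : Config d) :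
    |gibbsAvg β H Λ g σ| ≤ M := by
  have hZ := sum_exp_patch_pos β H Λ σ
  rw [gibbsAvg, abs_div, abs_of_pos hZ, div_le_iff₀ hZ, mul_sum]
  refine (abs_sum_le_sum_abs _ _).trans (sum_le_sum fun f _ => ?_)
  rw [abs_mul, Real.abs_exp]
  exact mul_le_mul_of_nonneg_right (hg _) (Real.exp_pos _).le

lemma gibbsAvg_nonneg {g : Config d → ℝ} (hg : ∀ σ, 0 ≤ g σ) (σ : Config d) :
    0 ≤ gibbsAvg β H Λ g σ :=
  div_nonneg (sum_nonneg fun _ _ => mul_nonneg (hg _) (Real.exp_pos _).le)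
    (sum_exp_patch_pos β H Λ σ).le

lemma gibbsAvg_pos {g : Config d → ℝ} (hg : ∀ σ, 0 < g σ) (σ : Config d) :
    0 < gibbsAvg β H Λ g σ :=
  div_pos (sum_pos (fun _ _ => mul_pos (hg _) (Real.exp_pos _)) univ_nonempty)
    (sum_exp_patch_pos β H Λ σ)

lemma gibbsAvg_eq_zero_iff {g : Config d → ℝ} (hg : ∀ σ, 0 ≤ g σ) {σ : Config d} :
    gibbsAvg β H Λ g σ = 0 ↔ ∀ f, g (patch Λ f σ) = 0 := by
  rw [gibbsAvg, div_eq_zero_iff, or_iff_left (sum_exp_patch_pos β H Λ σ).ne',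
    sum_eq_zero_iff_of_nonneg fun _ _ => mul_nonneg (hg _) (Real.exp_pos _).le]
  simp [(Real.exp_pos _).ne']

lemma gibbsAvg_mul_of_tilt {H₁ H₂ ρ : Config d → ℝ} {c : ℝ} (g : Config d → ℝ) {σ : Config d}
    (htilt : ∀ f, ρ (patch Λ f σ) * Real.exp (-β * H₁ (patch Λ f σ))
      = c * Real.exp (-β * H₂ (patch Λ f σ))) :
    gibbsAvg β H₁ Λ (fun τ => ρ τ * g τ) σ = gibbsAvg β H₂ Λ g σ * gibbsAvg β H₁ Λ ρ σ := by
  have hZ₂ := (sum_exp_patch_pos β H₂ Λ σ).ne'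
  have hρg : ∑ f : ↥Λ → ({-1, 1} : Finset ℤ),
      ρ (patch Λ f σ) * g (patch Λ f σ) * Real.exp (-β * H₁ (patch Λ f σ))
      = c * ∑ f : ↥Λ → ({-1, 1} : Finset ℤ),
          g (patch Λ f σ) * Real.exp (-β * H₂ (patch Λ f σ)) := by
    rw [mul_sum]
    refine sum_congr rfl fun f _ => ?_
    rw [mul_right_comm, htilt f]
    ring
  simp only [gibbsAvg, hρg, htilt, ← mul_sum]
  field_simp

end GibbsAvg

namespace IsDLRAt

variable {d : ℕ} {μ : Measure (Config d)} {β : ℝ} {H : Config d → ℝ}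
  {Λ : Finset (Fin d → ℤ)}

lemma integral_eq (h : IsDLRAt μ β H Λ) {g : Config d → ℝ} (hgm : Measurable g) {M : ℝ}
    (hg : ∀ σ, |g σ| ≤ M) : ∫ σ, g σ ∂μ = ∫ σ, gibbsAvg β H Λ g σ ∂μ := by
  have hM : 0 < M + 1 := by linarith [(abs_nonneg _).trans (hg 0)]
  have hscaled := h (fun σ => (M + 1)⁻¹ * g σ) (hgm.const_mul _) fun σ => by
    rw [abs_mul, abs_inv, abs_of_pos hM, inv_mul_le_iff₀ hM]
    linarith [hg σ]
  simp only [gibbsAvg_const_mul, integral_const_mul] at hscaled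
  exact mul_left_cancel₀ (inv_ne_zero hM.ne') hscaled

lemma integrable_gibbsAvg [IsProbabilityMeasure μ] (h : IsDLRAt μ β H Λ) {g : Config d → ℝ}
    (hgm : Measurable g) {M : ℝ} (hg : ∀ σ, |g σ| ≤ M) :
    Integrable (gibbsAvg β H Λ g) μ := by
  -- shifting `g` up makes its integral nonzero, and a function with nonzero integral is integrable
  have hM : 0 ≤ M := (abs_nonneg _).trans (hg 0)
  have hub : ∀ σ, |g σ + (M + 1)| ≤ 2 * M + 1 := fun σ => by
    rw [abs_le]; constructor <;> linarith [abs_le.1 (hg σ)]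
  have hpos : 0 < ∫ σ, g σ + (M + 1) ∂μ := by
    calc (0 : ℝ) < ∫ _, (1 : ℝ) ∂μ := by simp
      _ ≤ ∫ σ, g σ + (M + 1) ∂μ :=
        integral_mono (integrable_const _)
          (Integrable.of_bound (hgm.add_const _).aestronglyMeasurable _ (ae_of_all _ hub))
          fun σ => by linarith [abs_le.1 (hg σ)]
  rw [h.integral_eq (hgm.add_const _) hub] at hpos
  simp only [gibbsAvg_add_const] at hpos
  refine ((Integrable.of_integral_ne_zero hpos.ne').sub (integrable_const (M + 1))).congr
    (ae_of_all _ fun σ => ?_)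
  simp

lemma integral_gibbsAvg_indicator_one (h : IsDLRAt μ β H Λ) {A : Set (Config d)}
    (hA : MeasurableSet A) :
    ∫ σ, gibbsAvg β H Λ (A.indicator 1) σ ∂μ = μ.real A := by
  rw [← integral_indicator_one hA]
  exact (h _ (measurable_const.indicator hA) (abs_indicator_one_le_one A)).symm

lemma measure_eq_zero_of_forall_patch_notMem [IsFiniteMeasure μ] (h : IsDLRAt μ β H Λ)
    {A : Set (Config d)} (hA : MeasurableSet A) (hpatch : ∀ σ f, patch Λ f σ ∉ A) :
    μ A = 0 := by
  have hγ : gibbsAvg β H Λ (A.indicator 1) = 0 := funext fun σ =>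
    (gibbsAvg_eq_zero_iff (Set.indicator_nonneg fun _ _ => zero_le_one)).2 fun f =>
      Set.indicator_of_notMem (hpatch σ f) _
  have hA0 := h.integral_gibbsAvg_indicator_one hA
  rwa [hγ, Pi.zero_def, integral_zero, eq_comm, measureReal_eq_zero_iff] at hA0

lemma ae_abs_le_one [IsFiniteMeasure μ] (h : IsDLRAt μ β H Λ) {x : Fin d → ℤ} (hx : x ∈ Λ) :
    ∀ᵐ σ ∂μ, |σ x| ≤ 1 :=
  ae_iff.2 <| h.measure_eq_zero_of_forall_patch_notMem (by measurability)
    fun σ f hf => hf (abs_patch_le_one f σ hx)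

lemma ae_forall_patch_notMem [IsProbabilityMeasure μ] (h : IsDLRAt μ β H Λ)
    {A : Set (Config d)} (hA : MeasurableSet A) (hA0 : μ A = 0) :
    ∀ᵐ σ ∂μ, ∀ f, patch Λ f σ ∉ A := by
  have hnonneg : ∀ σ, 0 ≤ A.indicator (1 : Config d → ℝ) σ :=
    Set.indicator_nonneg fun _ _ => zero_le_one
  have hγ : gibbsAvg β H Λ (A.indicator 1) =ᵐ[μ] 0 := by
    refine (integral_eq_zero_iff_of_nonneg (gibbsAvg_nonneg hnonneg)
      (h.integrable_gibbsAvg (measurable_const.indicator hA) (abs_indicator_one_le_one A))).1 ?_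
    rw [h.integral_gibbsAvg_indicator_one hA, measureReal_def, hA0, ENNReal.toReal_zero]
  filter_upwards [hγ] with σ hσ f hf
  simpa [hf] using (gibbsAvg_eq_zero_iff hnonneg).1 hσ f

lemma integral_eq_of_aestronglyMeasurable [IsProbabilityMeasure μ] (h : IsDLRAt μ β H Λ)
    {g : Config d → ℝ} (hg : AEStronglyMeasurable g μ) {M : ℝ} (hgM : ∀ σ, |g σ| ≤ M) :
    ∫ σ, g σ ∂μ = ∫ σ, gibbsAvg β H Λ g σ ∂μ := by
  obtain ⟨A, hsub, hA, hA0⟩ := exists_measurable_superset_of_null (ae_iff.1 hg.ae_eq_mk)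
  set g₀ : Config d → ℝ := Aᶜ.indicator (hg.mk g)
  have hg₀ : ∀ σ ∉ A, g₀ σ = g σ := fun σ hσ => by
    simp only [g₀, Set.indicator_of_mem (Set.mem_compl hσ)]
    exact not_not.1 fun hne => hσ (hsub (Ne.symm hne))
  have hg₀M : ∀ σ, |g₀ σ| ≤ M := fun σ => by
    by_cases hσ : σ ∈ A
    · simpa [g₀, hσ] using (abs_nonneg _).trans (hgM σ)
    · exact hg₀ σ hσ ▸ hgM σ
  calc ∫ σ, g σ ∂μ = ∫ σ, g₀ σ ∂μ := integral_congr_ae <| by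
        filter_upwards [measure_eq_zero_iff_ae_notMem.1 hA0] with σ hσ using (hg₀ σ hσ).symm
    _ = ∫ σ, gibbsAvg β H Λ g₀ σ ∂μ :=
        h.integral_eq (hg.stronglyMeasurable_mk.measurable.indicator hA.compl) hg₀M
    _ = ∫ σ, gibbsAvg β H Λ g σ ∂μ := integral_congr_ae <| by
        filter_upwards [h.ae_forall_patch_notMem hA hA0] with σ hσ using
          gibbsAvg_congr fun f => hg₀ _ (hσ f)

theorem withDensity_ofReal [IsProbabilityMeasure μ] {H₂ : Config d → ℝ} (h : IsDLRAt μ β H Λ)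
    {ρ : Config d → ℝ} (hρm : Measurable ρ) (hρpos : ∀ σ, 0 < ρ σ) {M : ℝ}
    (hρM : ∀ σ, ρ σ ≤ M) {c : ℝ}
    (htilt : ∀ σ (f : ↥Λ → ({-1, 1} : Finset ℤ)), ρ (patch Λ f σ) * Real.exp (-β * H (patch Λ f σ))
      = c * Real.exp (-β * H₂ (patch Λ f σ))) :
    IsDLRAt (μ.withDensity fun σ => ENNReal.ofReal (ρ σ)) β H₂ Λ := by
  intro g hgm hg
  have hρ_mul : ∀ k : Config d → ℝ, (∀ σ, |k σ| ≤ 1) → ∀ σ, |ρ σ * k σ| ≤ M := fun k hk σ => by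
    rw [abs_mul, abs_of_pos (hρpos σ)]
    exact (mul_le_of_le_one_right (hρpos σ).le (hk σ)).trans (hρM σ)
  have hρ_integral : ∀ k : Config d → ℝ,
      ∫ σ, k σ ∂μ.withDensity (fun σ => ENNReal.ofReal (ρ σ)) = ∫ σ, ρ σ * k σ ∂μ := fun k => by
    rw [integral_withDensity_eq_integral_toReal_smul (by fun_prop)
      (ae_of_all _ fun _ => ENNReal.ofReal_lt_top)]
    simp [ENNReal.toReal_ofReal (hρpos _).le]
  set G := gibbsAvg β H₂ Λ g
  set R := gibbsAvg β H Λ ρ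
  have hkey : ∀ σ, gibbsAvg β H Λ (fun τ => ρ τ * g τ) σ = G σ * R σ := fun σ =>
    gibbsAvg_mul_of_tilt g (htilt σ)
  have hGm : AEStronglyMeasurable G μ := by
    have hρgI := h.integrable_gibbsAvg (hρm.mul hgm) (hρ_mul g hg)
    have hRI := h.integrable_gibbsAvg hρm (M := M) fun σ => (abs_of_pos (hρpos σ)).trans_le (hρM σ)
    have hG : G = fun σ => gibbsAvg β H Λ (fun τ => ρ τ * g τ) σ / R σ := funext fun σ => by
      rw [hkey, mul_div_cancel_right₀ _ (gibbsAvg_pos hρpos σ).ne']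
    rw [hG]
    exact (hρgI.aemeasurable.div hRI.aemeasurable).aestronglyMeasurable
  have hGρ : ∀ σ, |G σ * ρ σ| ≤ M := fun σ => by
    rw [mul_comm]; exact hρ_mul G (abs_gibbsAvg_le hg) σ
  calc ∫ σ, g σ ∂μ.withDensity _ = ∫ σ, ρ σ * g σ ∂μ := hρ_integral g
    _ = ∫ σ, gibbsAvg β H Λ (fun τ => ρ τ * g τ) σ ∂μ := h.integral_eq (hρm.mul hgm) (hρ_mul g hg)
    _ = ∫ σ, gibbsAvg β H Λ (fun τ => G τ * ρ τ) σ ∂μ := by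
        congr 1 with σ
        rw [hkey, gibbsAvg_mul_of_patch_invariant ρ fun f => gibbsAvg_patch g f σ]
    _ = ∫ σ, G σ * ρ σ ∂μ :=
        (h.integral_eq_of_aestronglyMeasurable (hGm.mul hρm.aestronglyMeasurable) hGρ).symm
    _ = ∫ σ, G σ ∂μ.withDensity _ := by simp only [hρ_integral, mul_comm]

end IsDLRAt

theorem statement18_general (d : ℕ) (β : ℝ)
    (Λ₀ : Finset (Fin d → ℤ)) (φ : (Fin d → ℤ) → ℝ)
    (Hhat : Finset (Fin d → ℤ) → Config d → ℝ)
    (μ ν : Measure (Config d)) [IsProbabilityMeasure μ]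
    (C : ℝ) (hC : 0 < C)
    (hν : ν = μ.withDensity
      (fun σ => ENNReal.ofReal (C * Real.exp (β * ∑ x ∈ Λ₀, φ x * (σ x : ℝ)))))
    (hμ : ∀ Λ : Finset (Fin d → ℤ), Λ₀ ⊆ Λ → IsDLRAt μ β (Hhat Λ) Λ) :
    ∀ Λ : Finset (Fin d → ℤ), Λ₀ ⊆ Λ →
      IsDLRAt ν β (fun σ => Hhat Λ σ - ∑ x ∈ Λ₀, φ x * (σ x : ℝ)) Λ := by
  intro Λ hΛ
  set Φ : Config d → ℝ := fun σ => ∑ x ∈ Λ₀, φ x * (σ x : ℝ)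
  set ρ : Config d → ℝ := fun σ =>
    min (C * Real.exp (β * Φ σ)) (C * Real.exp (|β| * ∑ x ∈ Λ₀, |φ x|))
  have hρ_eq : ∀ σ : Config d, (∀ x ∈ Λ₀, |σ x| ≤ 1) → ρ σ = C * Real.exp (β * Φ σ) :=
    fun σ hσ => min_eq_left <| by
      gcongr C * Real.exp ?_
      calc β * Φ σ ≤ |β| * |Φ σ| := (le_abs_self _).trans (abs_mul _ _).le
        _ ≤ |β| * ∑ x ∈ Λ₀, |φ x| := by gcongr; exact abs_sum_mul_le_sum_abs _ _ hσ
  have hν' : ν = μ.withDensity fun σ => ENNReal.ofReal (ρ σ) := by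
    rw [hν]
    refine withDensity_congr_ae ?_
    filter_upwards [(Filter.eventually_all_finset Λ₀).2 fun x hx =>
      (hμ Λ hΛ).ae_abs_le_one (hΛ hx)] with σ hσ
    rw [hρ_eq σ hσ]
  rw [hν']
  refine (hμ Λ hΛ).withDensity_ofReal (c := C) (by fun_prop) (fun σ => by positivity)
    (fun σ => min_le_right _ _) fun σ f => ?_
  rw [hρ_eq _ fun x hx => abs_patch_le_one f σ (hΛ hx), mul_assoc, ← Real.exp_add]
  congr 2
  ring

theorem statement18 (d : ℕ) (β : ℝ) (hβ : 0 < β)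
    (Λ₀ : Finset (Fin d → ℤ)) (φ : (Fin d → ℤ) → ℝ)
    (Hhat : Finset (Fin d → ℤ) → Config d → ℝ)
    (μ ν : Measure (Config d)) [IsProbabilityMeasure μ] [IsProbabilityMeasure ν]
    (C : ℝ) (hC : 0 < C)
    (hν : ν = μ.withDensity
      (fun σ => ENNReal.ofReal (C * Real.exp (β * ∑ x ∈ Λ₀, φ x * (σ x : ℝ)))))
    (hμ : ∀ Λ : Finset (Fin d → ℤ), Λ₀ ⊆ Λ → IsDLRAt μ β (Hhat Λ) Λ) :
    ∀ Λ : Finset (Fin d → ℤ), Λ₀ ⊆ Λ →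
      IsDLRAt ν β (fun σ => Hhat Λ σ - ∑ x ∈ Λ₀, φ x * (σ x : ℝ)) Λ :=
  statement18_general d β Λ₀ φ Hhat μ ν C hC hν hμ
end
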